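/- arXiv:2308.14285 — 3 statements merged into one kernel-verified Lean document; each statement's English description precedes it below -/
import Mathlib

section
/- Let R be a commutative Noetherian ring, M a finitely generated R-module, N a proper submodule of M, and p a maximal element (with respect to inclusion) of Ass_R(M/N). Then the submodule (N :_M p) = {x ∈ M : p•x ⊆ N} is a p-prime extension of N, i.e., N is a p-prime submodule of (N :_M p). -/
variable {R : Type*} [CommRing R] {M : Type*} [AddCommGroup M] [Module R M]

/-- The colon submodule `(N :_M I) = {x ∈ M | I • x ⊆ N}`. -/
def colonSubmodule (N : Submodule R M) (I : Ideal R) : Submodule R M where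
  carrier := {x | ∀ a ∈ I, a • x ∈ N}
  add_mem' := fun hx hy a ha => by simpa [smul_add] using N.add_mem (hx a ha) (hy a ha)
  zero_mem' := fun a _ => by simp
  smul_mem' := fun c x hx a ha => by
    rw [smul_comm]
    exact N.smul_mem c (hx a ha)

/-- `K` is a `p`-prime extension of `N`, i.e. `N` is a `p`-prime submodule of `K`. -/
def IsPrimeExt (p : Ideal R) (N K : Submodule R M) : Prop :=
  N < K ∧ N.colon K = p ∧ ∀ a : R, ∀ x ∈ K, a • x ∈ N → x ∈ N ∨ a ∈ p

/-- The associated primes of `T / N` for submodules `N ≤ T ≤ M`. -/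
def assOf (R : Type*) {M : Type*} [CommRing R] [AddCommGroup M] [Module R M]
    (N T : Submodule R M) : Set (Ideal R) :=
  associatedPrimes R ↥(T.map N.mkQ)

/-- `K` is a maximal `p`-prime extension of `N` inside `T`. -/
def IsMaximalPrimeExtIn (T : Submodule R M) (p : Ideal R) (N K : Submodule R M) : Prop :=
  K ≤ T ∧ IsPrimeExt p N K ∧ ∀ L ≤ T, IsPrimeExt p N L → ¬ K < L

/-- `K` is a regular `p`-prime extension of `N` inside `T`: a maximal `p`-prime
extension where `p` is a maximal element of `Ass (T/N)`. -/
def IsRegularPrimeExtIn (T : Submodule R M) (p : Ideal R) (N K : Submodule R M) : Prop :=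
  IsMaximalPrimeExtIn T p N K ∧ Maximal (· ∈ assOf R N T) p

/-- A regular prime extension (RPE) filtration inside `T` with primes `p i`. -/
def IsRPEFiltrationIn (T : Submodule R M) {n : ℕ}
    (F : Fin (n + 1) → Submodule R M) (p : Fin n → Ideal R) : Prop :=
  ∀ i : Fin n, IsRegularPrimeExtIn T (p i) (F i.castSucc) (F i.succ)

/-- The generalized prime ideal factorization of `N` in `T` is given by the multiset `s`:
there is an RPE filtration of `T` over `N` whose multiset of primes is `s`. -/
def HasGPIF (N T : Submodule R M) (s : Multiset (Ideal R)) : Prop :=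
  ∃ (n : ℕ) (F : Fin (n + 1) → Submodule R M) (p : Fin n → Ideal R),
    F 0 = N ∧ F (Fin.last n) = T ∧ IsRPEFiltrationIn T F p ∧ (List.ofFn p : Multiset (Ideal R)) = s

/-! A maximal associated prime `p` of `M ⧸ N` is realised as `(N :_R x)` for some `x`, and for
every `y ∉ N` with `p ⊆ (N :_R y)` the ideal `(N :_R y)` lies in some associated prime, which
by maximality is `p` again. Hence every element of `(N :_M p) \ N` has annihilator exactly `p`
modulo `N`, which is the `p`-primeness of `N` in `(N :_M p)`. -/

section

variable {R : Type*} [CommRing R] {M : Type*} [AddCommGroup M] [Module R M]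

theorem mem_colonSubmodule_iff_le_colon {N : Submodule R M} {I : Ideal R} {x : M} :
    x ∈ colonSubmodule N I ↔ I ≤ N.colon {x} := by
  simp only [SetLike.le_def, Submodule.mem_colon_singleton]
  rfl

theorem le_colonSubmodule (N : Submodule R M) (I : Ideal R) : N ≤ colonSubmodule N I :=
  fun _ hx a _ => N.smul_mem a hx

theorem le_colon_colonSubmodule (N : Submodule R M) (I : Ideal R) :
    I ≤ N.colon (colonSubmodule N I) :=
  fun a ha => Submodule.mem_colon.mpr fun _ hx => hx a ha

theorem Submodule.bot_colon_singleton_mkQ (N : Submodule R M) (x : M) :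
    (⊥ : Submodule R (M ⧸ N)).colon {N.mkQ x} = N.colon {x} := by
  ext r
  rw [Submodule.mem_colon_singleton, Submodule.mem_bot, ← map_smul, Submodule.mkQ_apply,
    Submodule.Quotient.mk_eq_zero, Submodule.mem_colon_singleton]

theorem Submodule.exists_colon_singleton_eq_of_isAssociatedPrime_quotient [IsNoetherianRing R]
    {N : Submodule R M} {p : Ideal R} (hp : IsAssociatedPrime p (M ⧸ N)) :
    ∃ x : M, N.colon {x} = p := by
  obtain ⟨-, x', hx'⟩ := isAssociatedPrime_iff.mp hp
  obtain ⟨x, rfl⟩ := N.mkQ_surjective x'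
  exact ⟨x, (N.bot_colon_singleton_mkQ x).symm.trans hx'.symm⟩

theorem colon_singleton_eq_of_maximal_associatedPrimes [IsNoetherianRing R] {p : Ideal R}
    (hp : Maximal (· ∈ associatedPrimes R M) p) {x : M} (hx : x ≠ 0)
    (hpx : p ≤ (⊥ : Submodule R M).colon {x}) : (⊥ : Submodule R M).colon {x} = p := by
  obtain ⟨q, hq, hxq⟩ := exists_le_isAssociatedPrime_of_isNoetherianRing R x hx
  exact le_antisymm (hxq.trans (hp.2 hq (hpx.trans hxq))) hpx

theorem Submodule.colon_singleton_eq_of_maximal_associatedPrimes_quotient [IsNoetherianRing R]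
    {N : Submodule R M} {p : Ideal R} (hp : Maximal (· ∈ associatedPrimes R (M ⧸ N)) p)
    {y : M} (hy : y ∉ N) (hpy : p ≤ N.colon {y}) : N.colon {y} = p := by
  rw [← N.bot_colon_singleton_mkQ] at hpy ⊢
  refine colon_singleton_eq_of_maximal_associatedPrimes hp (fun h => hy ?_) hpy
  rwa [Submodule.mkQ_apply, Submodule.Quotient.mk_eq_zero] at h

end

theorem colon_is_prime_ext_general {R : Type*} [CommRing R] [IsNoetherianRing R]
    {M : Type*} [AddCommGroup M] [Module R M]
    (N : Submodule R M) (p : Ideal R)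
    (hp : Maximal (· ∈ associatedPrimes R (M ⧸ N)) p) :
    IsPrimeExt p N (colonSubmodule N p) := by
  obtain ⟨x, hx⟩ := N.exists_colon_singleton_eq_of_isAssociatedPrime_quotient hp.1
  have hxN : x ∉ N := fun h =>
    hp.1.isPrime.ne_top (hx ▸ (N.colon_eq_top_iff_subset {x}).mpr (Set.singleton_subset_iff.mpr h))
  have hxK : x ∈ colonSubmodule N p := mem_colonSubmodule_iff_le_colon.mpr hx.ge
  refine ⟨SetLike.lt_iff_le_and_exists.mpr ⟨le_colonSubmodule N p, x, hxK, hxN⟩,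
    le_antisymm ?_ (le_colon_colonSubmodule N p), fun a y hy hay => or_iff_not_imp_left.mpr ?_⟩
  · exact (Submodule.colon_mono le_rfl (Set.singleton_subset_iff.mpr hxK)).trans hx.le
  · intro hyN
    rw [← N.colon_singleton_eq_of_maximal_associatedPrimes_quotient hp hyN
      (mem_colonSubmodule_iff_le_colon.mp hy)]
    exact Submodule.mem_colon_singleton.mpr hay

/-- If `p` is a maximal element of `Ass (M/N)` for a proper submodule `N`, then
`(N :_M p)` is a `p`-prime extension of `N`. -/
theorem colon_is_prime_ext {R : Type*} [CommRing R] [IsNoetherianRing R]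
    {M : Type*} [AddCommGroup M] [Module R M] [Module.Finite R M]
    (N : Submodule R M) (hN : N ≠ ⊤) (p : Ideal R)
    (hp : Maximal (· ∈ associatedPrimes R (M ⧸ N)) p) :
    IsPrimeExt p N (colonSubmodule N p) :=
  colon_is_prime_ext_general N p hp
end

section
/- Let R be a commutative Noetherian ring and N = M₀ ⊂ M₁ ⊂ ⋯ ⊂ Mₙ = M a filtration of submodules of a finitely generated R-module M such that each Mᵢ is a maximal pᵢ-prime extension of Mᵢ₋₁ in M. Then for each 1 ≤ i ≤ n, Ass_R(M/M_{i-1}) = {p_i, …, p_n}; in particular Ass_R(M/N) = {p₁, …, pₙ}. -/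
variable {R : Type*} [CommRing R] {M : Type*} [AddCommGroup M] [Module R M]

/-!
Each step `F i ⊂ F (i+1)` contributes exactly its prime: `Ass (M / A) = {p} ∪ Ass (M / K)`
whenever `K` is a maximal `p`-prime extension of `A`. The prime `p` is the annihilator of every
nonzero element of `K / A`, and an associated prime of `M / A` either is seen inside `K / A`
or survives in `M / K`. Conversely, let `q = (K : x)` be an associated prime of `M / K` other than `p`.
If `p ⊄ q`, then `(A : t • x) = q` for any `t ∈ p \ q`. If `p ⊂ q`, then `p • x ⊆ A`, so
`p` still kills `K + R x` modulo `A`; maximality of `K` forces some `y ∈ K + R x` outside `A`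
to be killed modulo `A` by an element outside `p`, and then `(A : y) = (K : y) = q`.
-/

namespace Submodule

variable {N : Submodule R M} {q : Ideal R} {x : M}

theorem colon_singleton_mkQ (N : Submodule R M) (x : M) :
    (⊥ : Submodule R (M ⧸ N)).colon {N.mkQ x} = N.colon {x} := by
  ext r
  rw [mem_colon_singleton, mem_colon_singleton, mem_bot, ← map_smul, mkQ_apply,
    Quotient.mk_eq_zero]

theorem mem_associatedPrimes_quotient_iff [IsNoetherianRing R] :
    q ∈ associatedPrimes R (M ⧸ N) ↔ q.IsPrime ∧ ∃ x, N.colon {x} = q := by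
  rw [AssociatedPrimes.mem_iff, isAssociatedPrime_iff, N.mkQ_surjective.exists]
  simp only [colon_singleton_mkQ, eq_comm]

theorem colon_singleton_eq_top_iff : N.colon {x} = ⊤ ↔ x ∈ N := by
  rw [colon_eq_top_iff_subset, Set.singleton_subset_iff, SetLike.mem_coe]

theorem colon_singleton_add_of_mem {k : M} (hk : k ∈ N) (y : M) :
    N.colon {k + y} = N.colon {y} := by
  ext u
  rw [mem_colon_singleton, mem_colon_singleton, smul_add, N.add_mem_iff_right (N.smul_mem u hk)]

theorem colon_singleton_smul_eq (hq : q.IsPrime) (hx : N.colon {x} = q) {r : R} (hr : r ∉ q) :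
    N.colon {r • x} = q := by
  ext u
  rw [mem_colon_singleton, smul_smul, ← mem_colon_singleton, hx]
  exact ⟨fun h => (hq.mem_or_mem h).resolve_right hr, fun h => q.mul_mem_right r h⟩

end Submodule

open Submodule

section PrimeExt

variable {p q : Ideal R} {A K : Submodule R M}

namespace IsPrimeExt

theorem smul_mem (h : IsPrimeExt p A K) {t : R} (ht : t ∈ p) {x : M} (hx : x ∈ K) : t • x ∈ A :=
  mem_colon.mp (h.2.1 ▸ ht) x hx

theorem colon_singleton_eq (h : IsPrimeExt p A K) {x : M} (hxK : x ∈ K) (hxA : x ∉ A) :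
    A.colon {x} = p := by
  ext a
  rw [mem_colon_singleton]
  exact ⟨fun hax => (h.2.2 a x hxK hax).resolve_left hxA, fun ha => h.smul_mem ha hxK⟩

theorem isPrime (h : IsPrimeExt p A K) : p.IsPrime := by
  obtain ⟨x, hxK, hxA⟩ := SetLike.exists_of_lt h.1
  have hcolon := h.colon_singleton_eq hxK hxA
  refine ⟨fun hp => hxA ?_, fun {a b} hab => ?_⟩
  · exact colon_singleton_eq_top_iff.mp (hcolon.trans hp)
  · rw [← hcolon, mem_colon_singleton, mul_smul] at hab
    rcases h.2.2 a (b • x) (K.smul_mem b hxK) hab with hbx | ha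
    · exact Or.inr (hcolon ▸ mem_colon_singleton.mpr hbx)
    · exact Or.inl ha

theorem mem_associatedPrimes_quotient (h : IsPrimeExt p A K) : p ∈ associatedPrimes R (M ⧸ A) := by
  obtain ⟨x, hxK, hxA⟩ := SetLike.exists_of_lt h.1
  exact ⟨h.isPrime, A.mkQ x, by rw [colon_singleton_mkQ, h.colon_singleton_eq hxK hxA,
    h.isPrime.radical]⟩

theorem colon_singleton_eq_of_smul_mem (h : IsPrimeExt p A K) {a : R} (ha : a ∉ p) {y : M}
    (hay : a • y ∈ A) : A.colon {y} = K.colon {y} := by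
  refine le_antisymm (colon_mono h.1.le le_rfl) fun s hs => ?_
  rw [mem_colon_singleton] at hs ⊢
  refine (h.2.2 a _ hs ?_).resolve_right ha
  rw [smul_comm]
  exact A.smul_mem s hay

theorem associatedPrimes_quotient_subset_insert [IsNoetherianRing R] (h : IsPrimeExt p A K) :
    associatedPrimes R (M ⧸ A) ⊆ insert p (associatedPrimes R (M ⧸ K)) := by
  intro q hq
  obtain ⟨hqprime, x, hx⟩ := mem_associatedPrimes_quotient_iff.mp hq
  by_cases hmeet : ∃ r : R, r • x ∈ K ∧ r • x ∉ A
  · obtain ⟨r, hrK, hrA⟩ := hmeet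
    have hr : r ∉ q := fun hr => hrA (mem_colon_singleton.mp (hx ▸ hr))
    exact Or.inl ((colon_singleton_smul_eq hqprime hx hr).symm.trans
      (h.colon_singleton_eq hrK hrA))
  · push Not at hmeet
    refine Or.inr (mem_associatedPrimes_quotient_iff.mpr ⟨hqprime, x, ?_⟩)
    rw [← hx]
    exact le_antisymm (fun r hr => mem_colon_singleton.mpr (hmeet r (mem_colon_singleton.mp hr)))
      (colon_mono h.1.le le_rfl)

theorem exists_colon_singleton_eq_of_not_le (h : IsPrimeExt p A K) (hq : q.IsPrime)
    (hx : K.colon {x} = q) (hpq : ¬p ≤ q) : ∃ y, A.colon {y} = q := by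
  obtain ⟨t, htp, htq⟩ := SetLike.not_le_iff_exists.mp hpq
  refine ⟨t • x, le_antisymm ((colon_mono h.1.le le_rfl).trans
    (colon_singleton_smul_eq hq hx htq).le) fun u hu => ?_⟩
  rw [mem_colon_singleton, smul_comm]
  rw [← hx, mem_colon_singleton] at hu
  exact h.smul_mem htp hu

end IsPrimeExt

namespace IsMaximalPrimeExtIn

theorem exists_colon_singleton_eq_of_lt (h : IsMaximalPrimeExtIn ⊤ p A K) (hq : q.IsPrime)
    {x : M} (hx : K.colon {x} = q) (hpq : p < q) : ∃ y, A.colon {y} = q := by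
  obtain ⟨-, hext, hmax⟩ := h
  obtain ⟨a, haq, hap⟩ := SetLike.exists_of_lt hpq
  have hxK : x ∉ K := fun hxK => hq.ne_top (hx ▸ colon_singleton_eq_top_iff.mpr hxK)
  have hpx : ∀ t ∈ p, t • x ∈ A := fun t ht => by
    have htx : t • x ∈ K := mem_colon_singleton.mp (hx ▸ hpq.le ht)
    refine (hext.2.2 a _ htx ?_).resolve_right hap
    rw [smul_comm]
    exact hext.smul_mem ht (mem_colon_singleton.mp (hx ▸ haq))
  set L := K ⊔ span R {x}
  have hKL : K < L := lt_of_le_of_ne le_sup_left fun hKL =>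
    hxK (hKL ▸ mem_sup_right (mem_span_singleton_self x))
  have hcolon : A.colon L = p := by
    refine le_antisymm (hext.2.1 ▸ colon_mono le_rfl hKL.le) fun t ht => ?_
    have hLA : L ≤ A.comap (t • LinearMap.id) :=
      sup_le (fun k hk => hext.smul_mem ht hk) ((span_singleton_le_iff_mem _ _).mpr (hpx t ht))
    exact mem_colon.mpr fun y hy => hLA hy
  have hnot : ¬IsPrimeExt p A L := fun hL => hmax L le_top hL hKL
  simp only [IsPrimeExt, hext.1.trans hKL, hcolon, true_and, not_forall] at hnot
  obtain ⟨b, y, hyL, hby, hy⟩ := hnot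
  push Not at hy
  obtain ⟨k, hk, _, hz, rfl⟩ := mem_sup.mp hyL
  obtain ⟨r, rfl⟩ := mem_span_singleton.mp hz
  have hAK := hext.colon_singleton_eq_of_smul_mem hy.2 hby
  rw [colon_singleton_add_of_mem hk] at hAK
  have hr : r ∉ q := fun hr => hy.1 <| colon_singleton_eq_top_iff.mp <|
    hAK.trans (colon_singleton_eq_top_iff.mpr (mem_colon_singleton.mp (hx ▸ hr)))
  exact ⟨k + r • x, hAK.trans (colon_singleton_smul_eq hq hx hr)⟩

theorem insert_subset_associatedPrimes_quotient [IsNoetherianRing R]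
    (h : IsMaximalPrimeExtIn ⊤ p A K) :
    insert p (associatedPrimes R (M ⧸ K)) ⊆ associatedPrimes R (M ⧸ A) := by
  refine Set.insert_subset h.2.1.mem_associatedPrimes_quotient fun q hq => ?_
  obtain ⟨hqprime, x, hx⟩ := mem_associatedPrimes_quotient_iff.mp hq
  rcases eq_or_ne q p with rfl | hqp
  · exact h.2.1.mem_associatedPrimes_quotient
  obtain ⟨y, hy⟩ : ∃ y, A.colon {y} = q := by
    by_cases hpq : p ≤ q
    · exact h.exists_colon_singleton_eq_of_lt hqprime hx (lt_of_le_of_ne hpq hqp.symm)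
    · exact h.2.1.exists_colon_singleton_eq_of_not_le hqprime hx hpq
  exact mem_associatedPrimes_quotient_iff.mpr ⟨hqprime, y, hy⟩

theorem associatedPrimes_quotient_eq_insert [IsNoetherianRing R]
    (h : IsMaximalPrimeExtIn ⊤ p A K) :
    associatedPrimes R (M ⧸ A) = insert p (associatedPrimes R (M ⧸ K)) :=
  h.2.1.associatedPrimes_quotient_subset_insert.antisymm h.insert_subset_associatedPrimes_quotient

end IsMaximalPrimeExtIn

end PrimeExt

theorem associatedPrimes_quotient_filtration [IsNoetherianRing R] {n : ℕ}
    {F : Fin (n + 1) → Submodule R M} {p : Fin n → Ideal R} (hlast : F (Fin.last n) = ⊤)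
    (hstep : ∀ i : Fin n, IsMaximalPrimeExtIn ⊤ (p i) (F i.castSucc) (F i.succ))
    (i : Fin (n + 1)) : associatedPrimes R (M ⧸ F i) = p '' {j | i ≤ j.castSucc} := by
  induction i using Fin.reverseInduction with
  | last =>
    have : Subsingleton (M ⧸ F (Fin.last n)) := Submodule.Quotient.subsingleton_iff.mpr hlast
    rw [associatedPrimes.eq_empty_of_subsingleton]
    simp
  | cast i ih =>
    rw [(hstep i).associatedPrimes_quotient_eq_insert, ih, ← Set.image_insert_eq]
    simp only [Fin.succ_le_castSucc_iff, Fin.castSucc_le_castSucc_iff]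
    congr 1
    ext j
    simp [le_iff_eq_or_lt, eq_comm]

theorem ass_of_maximal_prime_ext_filtration_general {R : Type*} [CommRing R] [IsNoetherianRing R]
    {M : Type*} [AddCommGroup M] [Module R M]
    {n : ℕ} (N : Submodule R M) (F : Fin (n + 1) → Submodule R M) (p : Fin n → Ideal R)
    (h0 : F 0 = N) (hlast : F (Fin.last n) = ⊤)
    (hstep : ∀ i : Fin n, IsMaximalPrimeExtIn ⊤ (p i) (F i.castSucc) (F i.succ)) :
    (∀ i : Fin n, associatedPrimes R (M ⧸ F i.castSucc) = p '' {j | i ≤ j}) ∧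
      associatedPrimes R (M ⧸ N) = Set.range p := by
  subst h0
  have key := associatedPrimes_quotient_filtration hlast hstep
  refine ⟨fun i => by simpa using key i.castSucc, ?_⟩
  simpa using key 0

/-- If `N = F 0 ⊂ F 1 ⊂ ⋯ ⊂ F n = M` is a filtration where each step is a maximal
`p i`-prime extension in `M`, then `Ass (M / F i) = {p i, …, p (n-1)}` for each `i`;
in particular `Ass (M/N) = {p 0, …, p (n-1)}`. -/
theorem ass_of_maximal_prime_ext_filtration {R : Type*} [CommRing R] [IsNoetherianRing R]
    {M : Type*} [AddCommGroup M] [Module R M] [Module.Finite R M]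
    {n : ℕ} (N : Submodule R M) (F : Fin (n + 1) → Submodule R M) (p : Fin n → Ideal R)
    (h0 : F 0 = N) (hlast : F (Fin.last n) = ⊤)
    (hstep : ∀ i : Fin n, IsMaximalPrimeExtIn ⊤ (p i) (F i.castSucc) (F i.succ)) :
    (∀ i : Fin n, associatedPrimes R (M ⧸ F i.castSucc) = p '' {j | i ≤ j}) ∧
      associatedPrimes R (M ⧸ N) = Set.range p :=
  ass_of_maximal_prime_ext_filtration_general N F p h0 hlast hstep
end

section
/- Let R be a commutative Noetherian ring, M a finitely generated R-module, and N a proper submodule of M. If a submodule K of M occurs in some regular prime extension filtration of M over N, then the generalized prime ideal factorization satisfies P_M(N) = P_M(K) · P_K(N). -/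
variable {R : Type*} [CommRing R] {M : Type*} [AddCommGroup M] [Module R M]

/-! A regular prime extension of `N` inside `T` is determined by its prime: it is the colon
`(N :_T p)`. If `p ≠ q` are both maximal in `Ass(T/N)`, then `q` is still maximal in
`Ass(T/(N :_T p))`, and `((N :_T p) :_T q) = ((N :_T q) :_T p)`. So two RPE filtrations with
different first primes can be rejoined after one more step each, and induction on the length
shows that all RPE filtrations of `T` over `N` carry the same primes up to permutation.
Cutting an RPE filtration of `M` over `N` at `K` gives one of `M` over `K` and, since every
step remains regular inside `K`, one of `K` over `N`. -/

namespace Submodule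

variable {N T : Submodule R M}

theorem colon_bot_singleton_mkQ {x : M} (hx : x ∈ T) :
    (⊥ : Submodule R (T.map N.mkQ)).colon {⟨N.mkQ x, x, hx, rfl⟩} = N.colon {x} := by
  ext r
  simp only [mem_colon_singleton, mem_bot, Subtype.ext_iff, SetLike.val_smul, mkQ_apply,
    ZeroMemClass.coe_zero, ← Quotient.mk_smul, Quotient.mk_eq_zero]

end Submodule

open Submodule

section AssociatedPrimes

variable [IsNoetherianRing R] {N T : Submodule R M}

theorem mem_assOf_iff {q : Ideal R} :
    q ∈ assOf R N T ↔ q.IsPrime ∧ ∃ x ∈ T, N.colon {x} = q := by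
  refine isAssociatedPrime_iff.trans (and_congr_right fun _ => ⟨?_, ?_⟩)
  · rintro ⟨⟨_, x, hx, rfl⟩, rfl⟩
    exact ⟨x, hx, (colon_bot_singleton_mkQ hx).symm⟩
  · rintro ⟨x, hx, rfl⟩
    exact ⟨_, (colon_bot_singleton_mkQ hx).symm⟩

theorem exists_mem_assOf_colon_le {x : M} (hxT : x ∈ T) (hxN : x ∉ N) :
    ∃ P ∈ assOf R N T, N.colon {x} ≤ P := by
  have hx : (⟨N.mkQ x, x, hxT, rfl⟩ : T.map N.mkQ) ≠ 0 := by
    simpa [Subtype.ext_iff, Quotient.mk_eq_zero] using hxN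
  obtain ⟨P, hP, hle⟩ := exists_le_isAssociatedPrime_of_isNoetherianRing R _ hx
  exact ⟨P, hP, (colon_bot_singleton_mkQ hxT).ge.trans hle⟩

theorem exists_maximal_assOf (hNT : N < T) : ∃ q, Maximal (· ∈ assOf R N T) q := by
  obtain ⟨x, hxT, hxN⟩ := SetLike.exists_of_lt hNT
  obtain ⟨P, hP, -⟩ := exists_mem_assOf_colon_le hxT hxN
  obtain ⟨q, hq, hmax⟩ := wellFounded_gt.has_min (assOf R N T) ⟨P, hP⟩
  exact ⟨q, maximal_iff_forall_gt.mpr ⟨hq, fun q' hlt hq' => hmax q' hq' hlt⟩⟩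

end AssociatedPrimes

theorem assOf_mono {N T T' : Submodule R M} (h : T ≤ T') : assOf R N T ⊆ assOf R N T' :=
  associatedPrimes.subset_of_injective (inclusion_injective (map_mono h))

@[simp]
theorem mem_colonSubmodule {N : Submodule R M} {q : Ideal R} {x : M} :
    x ∈ colonSubmodule N q ↔ ∀ a ∈ q, a • x ∈ N :=
  Iff.rfl

section RegularPrimeExt

variable {N T K : Submodule R M} {p q : Ideal R}

theorem mem_colonSubmodule_of_colon_singleton_eq {x : M} (hx : N.colon {x} = q) :
    x ∈ colonSubmodule N q :=
  fun _ ha => mem_colon_singleton.mp (hx.symm ▸ ha)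

theorem notMem_of_colon_singleton_eq {x : M} (hq : q ≠ ⊤) (hx : N.colon {x} = q) : x ∉ N :=
  fun h => hq (hx ▸ (Ideal.eq_top_iff_one _).mpr (mem_colon_singleton.mpr (by simpa using h)))

theorem colonSubmodule_inf_comm (N T : Submodule R M) (p q : Ideal R) :
    colonSubmodule (colonSubmodule N p ⊓ T) q ⊓ T =
      colonSubmodule (colonSubmodule N q ⊓ T) p ⊓ T := by
  have key : ∀ p q : Ideal R, colonSubmodule (colonSubmodule N p ⊓ T) q ⊓ T ≤
      colonSubmodule (colonSubmodule N q ⊓ T) p ⊓ T := by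
    rintro p q x ⟨hx, hxT⟩
    exact ⟨fun a ha => ⟨fun b hb => smul_comm b a x ▸ (hx b hb).1 a ha, T.smul_mem a hxT⟩, hxT⟩
  exact (key p q).antisymm (key q p)

theorem IsPrimeExt.le_colonSubmodule (h : IsPrimeExt q N K) : K ≤ colonSubmodule N q :=
  fun x hx _ ha => mem_colon.mp (h.2.1.symm ▸ ha) x hx

variable [IsNoetherianRing R]

theorem isPrimeExt_colonSubmodule_inf (hNT : N ≤ T) (hq : Maximal (· ∈ assOf R N T) q) :
    IsPrimeExt q N (colonSubmodule N q ⊓ T) := by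
  obtain ⟨hqp, x, hxT, hx⟩ := mem_assOf_iff.mp hq.1
  have hxK : x ∈ colonSubmodule N q ⊓ T := ⟨mem_colonSubmodule_of_colon_singleton_eq hx, hxT⟩
  refine ⟨lt_of_le_of_ne (le_inf (fun y hy a _ => N.smul_mem a hy) hNT)
    (fun h => notMem_of_colon_singleton_eq hqp.ne_top hx (h ▸ hxK)), le_antisymm ?_ ?_, ?_⟩
  · exact fun r hr => hx ▸ mem_colon_singleton.mpr (mem_colon.mp hr x hxK)
  · exact fun a ha => mem_colon.mpr fun y hy => hy.1 a ha
  · intro a y hy hay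
    refine or_iff_not_imp_left.mpr fun hyN => ?_
    obtain ⟨P, hP, hle⟩ := exists_mem_assOf_colon_le hy.2 hyN
    have hqP : q ≤ P := fun b hb => hle (mem_colon_singleton.mpr (hy.1 b hb))
    exact hq.2 hP hqP (hle (mem_colon_singleton.mpr hay))

theorem isRegularPrimeExtIn_colonSubmodule_inf (hNT : N ≤ T)
    (hq : Maximal (· ∈ assOf R N T) q) :
    IsRegularPrimeExtIn T q N (colonSubmodule N q ⊓ T) :=
  ⟨⟨inf_le_right, isPrimeExt_colonSubmodule_inf hNT hq,
    fun _ hLT hL hlt => hlt.not_ge (le_inf hL.le_colonSubmodule hLT)⟩, hq⟩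

theorem IsRegularPrimeExtIn.eq_colonSubmodule_inf (h : IsRegularPrimeExtIn T q N K) :
    K = colonSubmodule N q ⊓ T :=
  (le_inf h.1.2.1.le_colonSubmodule h.1.1).eq_of_not_lt <| h.1.2.2 _ inf_le_right <|
    isPrimeExt_colonSubmodule_inf (h.1.2.1.1.le.trans h.1.1) h.2

theorem IsRegularPrimeExtIn.restrict {T' : Submodule R M} (h : IsRegularPrimeExtIn T q N K)
    (hKT' : K ≤ T') (hT' : T' ≤ T) : IsRegularPrimeExtIn T' q N K := by
  obtain ⟨hqp, x, hxT, hx⟩ := mem_assOf_iff.mp h.2.1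
  have hxK : x ∈ K := h.eq_colonSubmodule_inf ▸ ⟨mem_colonSubmodule_of_colon_singleton_eq hx, hxT⟩
  exact ⟨⟨hKT', h.1.2.1, fun L hL => h.1.2.2 L (hL.trans hT')⟩,
    mem_assOf_iff.mpr ⟨hqp, x, hKT' hxK, hx⟩, fun _ hq' => h.2.2 (assOf_mono hT' hq')⟩

theorem maximal_assOf_colonSubmodule_inf (hp : Maximal (· ∈ assOf R N T) p)
    (hq : Maximal (· ∈ assOf R N T) q) (hpq : p ≠ q) :
    Maximal (· ∈ assOf R (colonSubmodule N p ⊓ T) T) q := by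
  obtain ⟨s, hsp, hsq⟩ := SetLike.not_le_iff_exists.mp fun h => hpq (h.antisymm (hp.2 hq.1 h))
  obtain ⟨hqp, y, hyT, hy⟩ := mem_assOf_iff.mp hq.1
  refine ⟨mem_assOf_iff.mpr ⟨hqp, y, hyT, ?_⟩, fun q' hq' hqq' => ?_⟩
  · ext r
    simp only [mem_colon_singleton, mem_inf, mem_colonSubmodule, T.smul_mem r hyT, and_true]
    refine ⟨fun h => ?_, fun hr a _ => ?_⟩
    · have : s * r ∈ q := hy ▸ mem_colon_singleton.mpr (by rw [mul_smul]; exact h s hsp)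
      exact (hqp.mem_or_mem this).resolve_left hsq
    · exact N.smul_mem a (mem_colon_singleton.mp (hy.symm ▸ hr))
  · obtain ⟨hq'p, z, hzT, hz⟩ := mem_assOf_iff.mp hq'
    obtain ⟨s', hs'p, hs'z⟩ : ∃ s' ∈ p, s' • z ∉ N := by
      simpa [hzT] using notMem_of_colon_singleton_eq hq'p.ne_top hz
    obtain ⟨P, hP, hle⟩ := exists_mem_assOf_colon_le (T.smul_mem s' hzT) hs'z
    have hq'P : q' ≤ P := fun r hr => hle <| mem_colon_singleton.mpr <| by
      rw [smul_comm]
      have hrz : r • z ∈ colonSubmodule N p ⊓ T := mem_colon_singleton.mp (hz.symm ▸ hr)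
      exact hrz.1 s' hs'p
    exact hq'P.trans (hq.2 hP (hqq'.trans hq'P))

end RegularPrimeExt

/-- `RPEChain T N l`: there is an RPE filtration of `T` over `N` whose primes, in order,
are the entries of `l`. -/
inductive RPEChain (T : Submodule R M) : Submodule R M → List (Ideal R) → Prop
  | nil : RPEChain T T []
  | cons {N K : Submodule R M} {q : Ideal R} {l : List (Ideal R)} :
      IsRegularPrimeExtIn T q N K → RPEChain T K l → RPEChain T N (q :: l)

namespace RPEChain

variable {T N : Submodule R M} {l : List (Ideal R)}

theorem le (h : RPEChain T N l) : N ≤ T := by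
  induction h with
  | nil => exact le_rfl
  | cons hK _ ih => exact hK.1.2.1.1.le.trans ih

theorem lt_of_cons {q : Ideal R} (h : RPEChain T N (q :: l)) : N < T := by
  obtain _ | ⟨hK, hl⟩ := h
  exact hK.1.2.1.1.trans_le hl.le

variable [IsNoetherianRing R] [Module.Finite R M]

theorem exists_of_le (hNT : N ≤ T) : ∃ l, RPEChain T N l := by
  induction N using IsNoetherian.induction with
  | hgt N ih =>
    obtain rfl | hlt := hNT.eq_or_lt
    · exact ⟨[], nil⟩
    obtain ⟨q, hq⟩ := exists_maximal_assOf hlt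
    have hK := isRegularPrimeExtIn_colonSubmodule_inf hNT hq
    obtain ⟨l, hl⟩ := ih _ hK.1.2.1.1 hK.1.1
    exact ⟨q :: l, cons hK hl⟩

theorem exists_swap {A B : Submodule R M} {p q : Ideal R} (hA : IsRegularPrimeExtIn T p N A)
    (hB : IsRegularPrimeExtIn T q N B) (hpq : p ≠ q) :
    ∃ l, RPEChain T A (q :: l) ∧ RPEChain T B (p :: l) := by
  rw [hA.eq_colonSubmodule_inf, hB.eq_colonSubmodule_inf]
  obtain ⟨l, hl⟩ :=
    exists_of_le (inf_le_right : colonSubmodule (colonSubmodule N p ⊓ T) q ⊓ T ≤ T)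
  refine ⟨l, cons (isRegularPrimeExtIn_colonSubmodule_inf inf_le_right
      (maximal_assOf_colonSubmodule_inf hA.2 hB.2 hpq)) hl,
    cons (isRegularPrimeExtIn_colonSubmodule_inf inf_le_right
      (maximal_assOf_colonSubmodule_inf hB.2 hA.2 hpq.symm)) ?_⟩
  rwa [colonSubmodule_inf_comm]

theorem perm {l₁ l₂ : List (Ideal R)} (h₁ : RPEChain T N l₁) (h₂ : RPEChain T N l₂) :
    l₁.Perm l₂ := by
  induction hn : l₁.length using Nat.strong_induction_on generalizing N l₁ l₂ with
  | _ n ih =>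
    obtain _ | @⟨_, A, p, l₁', hA, h₁'⟩ := h₁ <;> obtain _ | @⟨_, B, q, l₂', hB, h₂'⟩ := h₂
    · exact .refl _
    · exact absurd (cons hB h₂').lt_of_cons (lt_irrefl _)
    · exact absurd (cons hA h₁').lt_of_cons (lt_irrefl _)
    subst hn
    by_cases hpq : p = q
    · subst hpq
      rw [hA.eq_colonSubmodule_inf, ← hB.eq_colonSubmodule_inf] at h₁'
      exact (ih _ (by simp) h₁' h₂' rfl).cons p
    obtain ⟨l, hAl, hBl⟩ := exists_swap hA hB hpq
    have e₁ : l₁'.Perm (q :: l) := ih _ (by simp) h₁' hAl rfl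
    have e₂ : (p :: l).Perm l₂' := ih _ (by simp [e₁.length_eq]) hBl h₂' rfl
    exact (e₁.cons p).trans ((List.Perm.swap q p l).trans (e₂.cons q))

end RPEChain

namespace IsRPEFiltrationIn

variable {T : Submodule R M}

theorem tail {n : ℕ} {F : Fin (n + 2) → Submodule R M} {p : Fin (n + 1) → Ideal R}
    (hF : IsRPEFiltrationIn T F p) :
    IsRPEFiltrationIn T (fun i => F i.succ) (fun i => p i.succ) :=
  fun i => by simpa only [Fin.succ_castSucc] using hF i.succ

theorem rpeChain_drop {n : ℕ} {F : Fin (n + 1) → Submodule R M} {p : Fin n → Ideal R}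
    (hF : IsRPEFiltrationIn T F p) (hlast : F (Fin.last n) = T) (r : Fin (n + 1)) :
    RPEChain T (F r) ((List.ofFn p).drop r) := by
  induction n with
  | zero =>
    obtain rfl : r = Fin.last 0 := Subsingleton.elim (α := Fin 1) _ _
    rw [hlast]
    simpa using RPEChain.nil
  | succ n ih =>
    have htail := ih hF.tail (by simpa using hlast)
    cases r using Fin.cases with
    | zero => simpa [List.ofFn_succ] using RPEChain.cons (hF 0) (htail 0)
    | succ r => simpa [List.ofFn_succ] using htail r

theorem rpeChain {n : ℕ} {F : Fin (n + 1) → Submodule R M} {p : Fin n → Ideal R}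
    (hF : IsRPEFiltrationIn T F p) (hlast : F (Fin.last n) = T) :
    RPEChain T (F 0) (List.ofFn p) := by
  simpa using hF.rpeChain_drop hlast 0

theorem rpeChain_take [IsNoetherianRing R] {n : ℕ} {F : Fin (n + 1) → Submodule R M}
    {p : Fin n → Ideal R} (hF : IsRPEFiltrationIn T F p) (hlast : F (Fin.last n) = T)
    (r : Fin (n + 1)) : RPEChain (F r) (F 0) ((List.ofFn p).take r) := by
  induction n with
  | zero =>
    obtain rfl : r = 0 := Subsingleton.elim (α := Fin 1) _ _
    simpa using RPEChain.nil
  | succ n ih =>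
    cases r using Fin.cases with
    | zero => simpa using RPEChain.nil
    | succ r =>
      have htail := ih hF.tail (by simpa using hlast) r
      have hstep := (hF 0).restrict htail.le (hF.rpeChain_drop hlast r.succ).le
      simpa [List.ofFn_succ] using RPEChain.cons hstep htail

end IsRPEFiltrationIn

theorem HasGPIF.eq_of_rpeChain [IsNoetherianRing R] [Module.Finite R M] {N T : Submodule R M}
    {s : Multiset (Ideal R)} {l : List (Ideal R)} (hs : HasGPIF N T s) (hl : RPEChain T N l) :
    s = l := by
  obtain ⟨n, F, p, rfl, hlast, hF, rfl⟩ := hs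
  exact Multiset.coe_eq_coe.mpr ((hF.rpeChain hlast).perm hl)

theorem gpif_mul_of_mem_rpe_filtration_general {R : Type*} [CommRing R] [IsNoetherianRing R]
    {M : Type*} [AddCommGroup M] [Module R M] [Module.Finite R M]
    (N K : Submodule R M)
    {n : ℕ} (F : Fin (n + 1) → Submodule R M) (p : Fin n → Ideal R)
    (h0 : F 0 = N) (hlast : F (Fin.last n) = ⊤) (hF : IsRPEFiltrationIn ⊤ F p)
    (hK : ∃ r : Fin (n + 1), F r = K)
    (I J L : Multiset (Ideal R))
    (hI : HasGPIF N ⊤ I) (hJ : HasGPIF K ⊤ J) (hL : HasGPIF N K L) :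
    I.prod = J.prod * L.prod := by
  obtain ⟨r, rfl⟩ := hK
  subst h0
  rw [hI.eq_of_rpeChain (hF.rpeChain hlast),
    hJ.eq_of_rpeChain (hF.rpeChain_drop hlast r), hL.eq_of_rpeChain (hF.rpeChain_take hlast r),
    mul_comm]
  simp only [Multiset.prod_coe, ← List.prod_append, List.take_append_drop]

/-- If a submodule `K` occurs in some RPE filtration of `M` over `N`, then
`P_M(N) = P_M(K) · P_K(N)`: whenever `I`, `J`, `L` are the products of the primes in
RPE filtrations of `M` over `N`, of `M` over `K`, and of `K` over `N` respectively,
one has `I = J * L`. -/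
theorem gpif_mul_of_mem_rpe_filtration {R : Type*} [CommRing R] [IsNoetherianRing R]
    {M : Type*} [AddCommGroup M] [Module R M] [Module.Finite R M]
    (N K : Submodule R M) (hN : N ≠ ⊤)
    {n : ℕ} (F : Fin (n + 1) → Submodule R M) (p : Fin n → Ideal R)
    (h0 : F 0 = N) (hlast : F (Fin.last n) = ⊤) (hF : IsRPEFiltrationIn ⊤ F p)
    (hK : ∃ r : Fin (n + 1), F r = K)
    (I J L : Multiset (Ideal R))
    (hI : HasGPIF N ⊤ I) (hJ : HasGPIF K ⊤ J) (hL : HasGPIF N K L) :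
    I.prod = J.prod * L.prod :=
  gpif_mul_of_mem_rpe_filtration_general N K F p h0 hlast hF hK I J L hI hJ hL
end
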